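/- Let 0 < α < 1, n ≥ 3, j even with 2 ≤ j ≤ n, and let θ be the unique solution in ((j-1)π/n, jπ/n) of nx = (j-1)π + η_α(x). Then |θ - ((j-1)π/n + η_α((j-1)π/n)/n)| ≤ π·K₁(α)/n², where K₁(α) = max{α/(1-α), (1-α)/α}. -/

import Mathlib

/-!
The map `η(x) = 2 arctan(κ cot(x/2))` has derivative `-κ / (sin²(x/2) + κ² cos²(x/2))` on `(0, π)`,
whose absolute value is at most `max κ κ⁻¹`, so `η` is `max κ κ⁻¹`-Lipschitz there. Writing
`a = (j-1)π/n`, the equation gives `θ = a + η(θ)/n`, hence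
`|θ - (a + η(a)/n)| = |η(θ) - η(a)|/n ≤ max κ κ⁻¹ · |θ - a| / n`, and `0 < θ - a < π/n`.
-/

open Real Set

lemma hasDerivAt_two_mul_arctan_mul_cot_half (κ : ℝ) {x : ℝ} (hx : sin (x / 2) ≠ 0) :
    HasDerivAt (fun y => 2 * arctan (κ * cot (y / 2)))
      (-(κ / (sin (x / 2) ^ 2 + κ ^ 2 * cos (x / 2) ^ 2))) x := by
  have hhalf : HasDerivAt (fun y : ℝ => y / 2) (1 / 2) x := by
    simpa using (hasDerivAt_id x).div_const 2
  have hcot : HasDerivAt (fun y => cos (y / 2) / sin (y / 2))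
      ((-sin (x / 2) * (1 / 2) * sin (x / 2) - cos (x / 2) * (cos (x / 2) * (1 / 2)))
        / sin (x / 2) ^ 2) x :=
    ((hasDerivAt_cos _).comp x hhalf).div ((hasDerivAt_sin _).comp x hhalf) hx
  simp only [← cot_eq_cos_div_sin] at hcot
  refine (((hasDerivAt_arctan _).comp x (hcot.const_mul κ)).const_mul 2).congr_deriv ?_
  have hD : sin (x / 2) ^ 2 + κ ^ 2 * cos (x / 2) ^ 2 ≠ 0 := by
    have : 0 < sin (x / 2) ^ 2 := by positivity
    positivity
  rw [cot_eq_cos_div_sin]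
  field_simp
  linear_combination (-κ) * sin_sq_add_cos_sq (x / 2)

lemma div_sin_sq_add_mul_cos_sq_le_max {κ : ℝ} (hκ : 0 < κ) (t : ℝ) :
    κ / (sin t ^ 2 + κ ^ 2 * cos t ^ 2) ≤ max κ κ⁻¹ := by
  have hpy := sin_sq_add_cos_sq t
  rcases le_total κ 1 with h | h
  · have hmin : κ ^ 2 ≤ sin t ^ 2 + κ ^ 2 * cos t ^ 2 := by
      have : κ ^ 2 ≤ 1 := pow_le_one₀ hκ.le h
      nlinarith [mul_nonneg (sub_nonneg.2 this) (sq_nonneg (sin t))]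
    calc κ / (sin t ^ 2 + κ ^ 2 * cos t ^ 2) ≤ κ / κ ^ 2 := by gcongr
      _ = κ⁻¹ := by field_simp
      _ ≤ max κ κ⁻¹ := le_max_right _ _
  · have hmin : 1 ≤ sin t ^ 2 + κ ^ 2 * cos t ^ 2 := by
      have : 1 ≤ κ ^ 2 := one_le_pow₀ h
      nlinarith [mul_nonneg (sub_nonneg.2 this) (sq_nonneg (cos t))]
    calc κ / (sin t ^ 2 + κ ^ 2 * cos t ^ 2) ≤ κ / 1 := by gcongr
      _ ≤ max κ κ⁻¹ := by rw [div_one]; exact le_max_left _ _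

lemma abs_two_mul_arctan_mul_cot_half_sub_le {κ : ℝ} (hκ : 0 < κ) {x y : ℝ}
    (hx : x ∈ Ioo 0 π) (hy : y ∈ Ioo 0 π) :
    |2 * arctan (κ * cot (x / 2)) - 2 * arctan (κ * cot (y / 2))| ≤ max κ κ⁻¹ * |x - y| := by
  refine (convex_Ioo 0 π).norm_image_sub_le_of_norm_hasDerivWithin_le
    (fun t ht => (hasDerivAt_two_mul_arctan_mul_cot_half κ ?_).hasDerivWithinAt)
    (fun t _ => ?_) hy hx
  · exact (sin_pos_of_pos_of_lt_pi (by linarith [ht.1]) (by linarith [ht.2, pi_pos])).ne'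
  · rw [norm_neg, Real.norm_of_nonneg (by positivity)]
    exact div_sin_sq_add_mul_cos_sq_le_max hκ _

lemma abs_sub_first_order_approx_le {g : ℝ → ℝ} {n c θ L δ : ℝ} (hn : 0 < n) (hL : 0 ≤ L)
    (hθ : n * θ = c + g θ) (hg : |g θ - g (c / n)| ≤ L * |θ - c / n|)
    (hδ : |θ - c / n| ≤ δ) :
    |θ - (c / n + g (c / n) / n)| ≤ L * δ / n := by
  have hθ' : θ = c / n + g θ / n := by field_simp; linarith
  calc |θ - (c / n + g (c / n) / n)| = |g θ - g (c / n)| / n := by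
        rw [← abs_of_pos hn, ← abs_div, abs_of_pos hn]
        congr 1
        nth_rewrite 1 [hθ']
        ring
    _ ≤ L * δ / n := by gcongr; exact hg.trans (by gcongr)

theorem theta_first_approximation_general (α : ℝ) (hα0 : 0 < α) (hα1 : α < 1)
    (n : ℕ) (j : ℕ) (hj2 : 2 ≤ j) (hjn : j ≤ n)
    (η : ℝ → ℝ)
    (hη : ∀ x ∈ Ioo (0 : ℝ) π, η x = 2 * arctan ((α / (1 - α)) * Real.cot (x / 2)))
    (θ : ℝ) (hθmem : θ ∈ Ioo ((j - 1) * π / n) (j * π / n))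
    (hθeq : n * θ = (j - 1) * π + η θ) :
    |θ - ((j - 1) * π / n + η ((j - 1) * π / n) / n)|
      ≤ π * max (α / (1 - α)) ((1 - α) / α) / n ^ 2 := by
  rw [← inv_div α (1 - α)]
  set κ := α / (1 - α)
  have hκ : 0 < κ := div_pos hα0 (by linarith)
  have hn : (0 : ℝ) < n := Nat.cast_pos.2 (by omega)
  have hj1 : (1 : ℝ) ≤ j - 1 := by
    have : (2 : ℝ) ≤ j := by exact_mod_cast hj2
    linarith
  have hjn' : (j : ℝ) ≤ n := by exact_mod_cast hjn
  have ha : (j - 1) * π / n ∈ Ioo 0 π :=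
    ⟨by positivity, by rw [div_lt_iff₀ hn]; nlinarith [pi_pos]⟩
  have hθ : θ ∈ Ioo 0 π :=
    ⟨ha.1.trans hθmem.1, hθmem.2.trans_le (by rw [div_le_iff₀ hn]; nlinarith [pi_pos])⟩
  have hdist : |θ - (j - 1) * π / n| ≤ π / n := by
    rw [abs_of_pos (sub_pos.2 hθmem.1)]
    linarith [hθmem.2, show (j : ℝ) * π / n = (j - 1) * π / n + π / n by ring]
  have hlip : |η θ - η ((j - 1) * π / n)| ≤ max κ κ⁻¹ * |θ - (j - 1) * π / n| := by
    rw [hη θ hθ, hη _ ha]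
    exact abs_two_mul_arctan_mul_cot_half_sub_le hκ hθ ha
  calc _ ≤ max κ κ⁻¹ * (π / n) / n :=
        abs_sub_first_order_approx_le hn (by positivity) hθeq hlip hdist
    _ = _ := by ring

/-- First-order approximation of the solution `θ` of the main equation:
`|θ - ((j-1)π/n + η_α((j-1)π/n)/n)| ≤ π K₁(α)/n²`. -/
theorem theta_first_approximation (α : ℝ) (hα0 : 0 < α) (hα1 : α < 1)
    (n : ℕ) (hn : 3 ≤ n) (j : ℕ) (hj2 : 2 ≤ j) (hjn : j ≤ n) (hje : Even j)
    (η : ℝ → ℝ)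
    (hη0 : η 0 = π) (hηπ : η π = 0)
    (hη : ∀ x ∈ Ioo (0 : ℝ) π, η x = 2 * arctan ((α / (1 - α)) * Real.cot (x / 2)))
    (θ : ℝ) (hθmem : θ ∈ Ioo ((j - 1) * π / n) (j * π / n))
    (hθeq : n * θ = (j - 1) * π + η θ) :
    |θ - ((j - 1) * π / n + η ((j - 1) * π / n) / n)|
      ≤ π * max (α / (1 - α)) ((1 - α) / α) / n ^ 2 :=
  theta_first_approximation_general α hα0 hα1 n j hj2 hjn η hη θ hθmem hθeq
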